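/- Let a_{kj} ∈ C¹(ℝ³;ℝ) with a_{kj} = a_{jk}, let κ : ℝ³ → ℝ be continuous, ω ∈ ℝ, and let χ ∈ C²(ℝ³;ℝ) be compactly supported with χ(0) = 1. For x ≠ y define R(x,y) := −(1/(4π)) Σ_{k,j} { ∂_{x_k}[ ∂_{x_j}χ(x−y) · a_{kj}(x)/|x−y| ] + ∂_{x_k}[ a_{kj}(x) χ(x−y) ] · ∂_{x_j}(1/|x−y|) + a_{kj}(x) (χ(x−y)−1) ∂_{x_k}∂_{x_j}(1/|x−y|) } − ω² κ(x) χ(x−y)/(4π|x−y|), and R̃(x,y) := R(x,y) − (1/(4π)) Σ_{k,j} ( a_{kj}(x) − a_{kj}(y) ) ∂_{x_k}∂_{x_j}(1/|x−y|). Then R and R̃ have only weak singularities on the diagonal: for every compact set K ⊂ ℝ³ there exists C > 0 such that |R(x,y)| ≤ C |x−y|^{−2} and |R̃(x,y)| ≤ C |x−y|^{−2} for all x, y ∈ K with x ≠ y. -/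

import Mathlib

open MeasureTheory Filter
open scoped Topology BigOperators

noncomputable section

/-- Three-dimensional Euclidean space. -/
abbrev E3 := EuclideanSpace ℝ (Fin 3)

/-- `∂_j(1/|z|) = −z_j/|z|³` for `z ≠ 0`. -/
def d1 (z : E3) (j : Fin 3) : ℝ := -z j / ‖z‖ ^ 3

/-- `∂_k∂_j(1/|z|) = (3z_kz_j − δ_{kj}|z|²)/|z|⁵` for `z ≠ 0`. -/
def d2 (z : E3) (k j : Fin 3) : ℝ :=
  (3 * z k * z j - (if k = j then (1 : ℝ) else 0) * ‖z‖ ^ 2) / ‖z‖ ^ 5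

/-- The remainder kernel `R(x,y)` arising in the decomposition of
`A₂(x,∂_x)P_χ(x−y)` for the localized quasi-parametrix `P_χ(x) = −χ(x)/(4π|x|)`. -/
def Rker (a : Fin 3 → Fin 3 → E3 → ℝ) (κ : E3 → ℝ) (ω : ℝ) (χ : E3 → ℝ)
    (x y : E3) : ℝ :=
  -(1 / (4 * Real.pi)) * ∑ k : Fin 3, ∑ j : Fin 3,
      (fderiv ℝ (fun w : E3 =>
          fderiv ℝ χ (w - y) (EuclideanSpace.single j 1) * a k j w / ‖w - y‖)
          x (EuclideanSpace.single k 1)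
        + fderiv ℝ (fun w : E3 => a k j w * χ (w - y)) x (EuclideanSpace.single k 1)
            * d1 (x - y) j
        + a k j x * (χ (x - y) - 1) * d2 (x - y) k j)
    - ω ^ 2 * κ x * χ (x - y) / (4 * Real.pi * ‖x - y‖)

/-- The modified remainder kernel
`R̃(x,y) = R(x,y) − (1/4π) Σ (a_{kj}(x) − a_{kj}(y)) ∂_k∂_j(1/|x−y|)`. -/
def Rtker (a : Fin 3 → Fin 3 → E3 → ℝ) (κ : E3 → ℝ) (ω : ℝ) (χ : E3 → ℝ)
    (x y : E3) : ℝ :=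
  Rker a κ ω χ x y -
    (1 / (4 * Real.pi)) * ∑ k : Fin 3, ∑ j : Fin 3,
      (a k j x - a k j y) * d2 (x - y) k j

/-!
Each term of `R` and `R̃` is a product of a factor that is continuous on `K × K`, hence bounded,
and a singular factor of order at most two: `1/|x−y|`, `∂_j(1/|x−y|) = O(|x−y|⁻²)`, or
`∂_k∂_j(1/|x−y|) = O(|x−y|⁻³)` multiplied by `χ(x−y) − χ(0)` or `a(x) − a(y)`, which are
`O(|x−y|)` because `C¹` functions are Lipschitz on compact sets. In the first term the product rule
splits off `∂_k(1/|w−y|)`, whose size is at most `|x−y|⁻²` because the norm is `1`-Lipschitz.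
-/

open Asymptotics Function

theorem mul_inv_pow_add_two {G₀ : Type*} [GroupWithZero G₀] (a : G₀) (n : ℕ) :
    a * a⁻¹ ^ (n + 2) = a⁻¹ ^ (n + 1) := by
  rcases eq_or_ne a 0 with rfl | h
  · simp
  · rw [pow_succ' _ (n + 1), mul_inv_cancel_left₀ h]

namespace Asymptotics

variable {α : Type*} {l : Filter α}

theorem IsBigO.mul_of_isBigO_one {f g h : α → ℝ} (hf : f =O[l] (fun _ => (1 : ℝ)))
    (hg : g =O[l] h) : (fun x => f x * g x) =O[l] h :=
  (hf.mul hg).congr_right fun _ => one_mul _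

theorem IsBigO.mul_inv_pow {f g r : α → ℝ} {n : ℕ} (hf : f =O[l] r)
    (hg : g =O[l] fun x => (r x)⁻¹ ^ (n + 2)) :
    (fun x => f x * g x) =O[l] fun x => (r x)⁻¹ ^ (n + 1) :=
  (hf.mul hg).congr_right fun x => mul_inv_pow_add_two (r x) n

end Asymptotics

theorem Continuous.isBigO_one_offDiag {X F : Type*} [TopologicalSpace X] [SeminormedAddGroup F]
    {f : X × X → F} (hf : Continuous f) {K : Set X} (hK : IsCompact K) :
    f =O[𝓟 K.offDiag] (fun _ => (1 : ℝ)) :=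
  (hf.continuousOn.isBigO_principal (hK.prod hK) (by simp)).mono
    (Filter.principal_mono.2 K.offDiag_subset_prod)

theorem isBigO_inv_norm_sub_offDiag {E : Type*} [SeminormedAddCommGroup E] {K : Set E}
    (hK : IsCompact K) :
    (fun p : E × E => ‖p.1 - p.2‖⁻¹) =O[𝓟 K.offDiag] (fun p => ‖p.1 - p.2‖⁻¹ ^ 2) :=
  ((Continuous.isBigO_one_offDiag (f := fun p : E × E => ‖p.1 - p.2‖) (by fun_prop) hK)
    |>.mul_of_isBigO_one (isBigO_refl _ _)).congr_left fun p => by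
      simpa using mul_inv_pow_add_two ‖p.1 - p.2‖ 0

section
variable {E F : Type*} [NormedAddCommGroup E] [NormedSpace ℝ E] [NormedAddCommGroup F]
  [NormedSpace ℝ F] {f : E → F} {K : Set E}

theorem ContDiff.isBigO_sub_sub (hf : ContDiff ℝ 1 f) (hK : IsCompact K) :
    (fun p : E × E => f p.1 - f p.2) =O[𝓟 (K ×ˢ K)] (fun p => ‖p.1 - p.2‖) := by
  obtain ⟨L, hL⟩ := hf.locallyLipschitz.locallyLipschitzOn.exists_lipschitzOnWith_of_compact hK
  refine isBigO_principal.2 ⟨L, fun p hp => ?_⟩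
  simpa [dist_eq_norm] using hL.dist_le_mul p.1 hp.1 p.2 hp.2

theorem ContDiff.isBigO_comp_sub_sub_apply_zero (hf : ContDiff ℝ 1 f) (hK : IsCompact K) :
    (fun p : E × E => f (p.1 - p.2) - f 0) =O[𝓟 (K ×ˢ K)] (fun p => ‖p.1 - p.2‖) := by
  set S := insert 0 ((fun p : E × E => p.1 - p.2) '' (K ×ˢ K))
  have hS : IsCompact S := ((hK.prod hK).image continuous_sub).insert 0
  have hmaps : Filter.Tendsto (fun p : E × E => (p.1 - p.2, (0 : E))) (𝓟 (K ×ˢ K)) (𝓟 (S ×ˢ S)) :=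
    Filter.tendsto_principal_principal.2 fun p hp =>
      ⟨Set.mem_insert_of_mem _ ⟨p, hp, rfl⟩, Set.mem_insert _ _⟩
  exact ((hf.isBigO_sub_sub hS).comp_tendsto hmaps).congr_right fun p => by simp

end

section
variable {E : Type*} [NormedAddCommGroup E] [InnerProductSpace ℝ E] {x y : E}

theorem differentiableAt_norm_sub (hxy : x ≠ y) : DifferentiableAt ℝ (fun w => ‖w - y‖) x :=
  (contDiffAt_norm ℝ (sub_ne_zero.2 hxy)).differentiableAt one_ne_zero |>.comp x
    (differentiableAt_id.sub_const y)

theorem differentiableAt_inv_norm_sub (hxy : x ≠ y) :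
    DifferentiableAt ℝ (fun w => ‖w - y‖⁻¹) x :=
  (differentiableAt_norm_sub hxy).inv (norm_ne_zero_iff.2 (sub_ne_zero.2 hxy))

theorem norm_fderiv_inv_norm_sub_le (hxy : x ≠ y) :
    ‖fderiv ℝ (fun w => ‖w - y‖⁻¹) x‖ ≤ ‖x - y‖⁻¹ ^ 2 := by
  have hr : ‖x - y‖ ≠ 0 := norm_ne_zero_iff.2 (sub_ne_zero.2 hxy)
  have hnorm := differentiableAt_norm_sub hxy
  have hlip : ‖fderiv ℝ (fun w => ‖w - y‖) x‖ ≤ 1 := by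
    simpa using hnorm.hasFDerivAt.le_of_lipschitz
      (lipschitzWith_one_norm.comp (IsometryEquiv.subRight y).isometry.lipschitz)
  have hinv : HasFDerivAt (fun w => ‖w - y‖⁻¹)
      ((-(‖x - y‖ ^ 2)⁻¹) • fderiv ℝ (fun w => ‖w - y‖) x) x :=
    (hasDerivAt_inv hr).comp_hasFDerivAt x hnorm.hasFDerivAt
  rw [hinv.fderiv, norm_smul, norm_neg, norm_inv, norm_pow, norm_norm, inv_pow]
  exact mul_le_of_le_one_right (by positivity) hlip

theorem fderiv_div_norm_sub {F : E → ℝ} (hF : DifferentiableAt ℝ F x) (hxy : x ≠ y) (v : E) :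
    fderiv ℝ (fun w => F w / ‖w - y‖) x v =
      F x * fderiv ℝ (fun w => ‖w - y‖⁻¹) x v + ‖x - y‖⁻¹ * fderiv ℝ F x v := by
  simp only [div_eq_mul_inv]
  rw [fderiv_fun_mul hF (differentiableAt_inv_norm_sub hxy)]
  simp [smul_eq_mul]

end

section
variable {E : Type*} [NormedAddCommGroup E] [InnerProductSpace ℝ E] {K : Set E}

theorem isBigO_fderiv_offDiag {F : E → E → ℝ} (hF : ContDiff ℝ 1 (uncurry F)) (hK : IsCompact K)
    (v : E) : (fun p : E × E => fderiv ℝ (F p.2) p.1 v) =O[𝓟 K.offDiag] (fun _ => (1 : ℝ)) := by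
  have hF' : ContDiff ℝ 1 (uncurry fun p : E × E => F p.2) :=
    hF.comp (contDiff_fst.snd.prodMk contDiff_snd)
  exact Continuous.isBigO_one_offDiag
    ((hF'.fderiv (n := 0) contDiff_fst (by norm_num)).continuous.clm_apply continuous_const) hK

theorem isBigO_fderiv_div_norm_sub_offDiag {F : E → E → ℝ} (hF : ContDiff ℝ 1 (uncurry F))
    (hK : IsCompact K) (v : E) :
    (fun p : E × E => fderiv ℝ (fun w => F p.2 w / ‖w - p.2‖) p.1 v) =O[𝓟 K.offDiag]
      (fun p => ‖p.1 - p.2‖⁻¹ ^ 2) := by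
  have hval : (fun p : E × E => F p.2 p.1) =O[𝓟 K.offDiag] (fun _ => (1 : ℝ)) :=
    Continuous.isBigO_one_offDiag (hF.continuous.comp (continuous_snd.prodMk continuous_fst)) hK
  have hsing : (fun p : E × E => fderiv ℝ (fun w => ‖w - p.2‖⁻¹) p.1 v) =O[𝓟 K.offDiag]
      (fun p => ‖p.1 - p.2‖⁻¹ ^ 2) := by
    refine isBigO_principal.2 ⟨‖v‖, fun p hp => ?_⟩
    calc ‖fderiv ℝ (fun w => ‖w - p.2‖⁻¹) p.1 v‖
        ≤ ‖fderiv ℝ (fun w => ‖w - p.2‖⁻¹) p.1‖ * ‖v‖ := ContinuousLinearMap.le_opNorm _ _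
      _ ≤ ‖p.1 - p.2‖⁻¹ ^ 2 * ‖v‖ := by gcongr; exact norm_fderiv_inv_norm_sub_le hp.2.2
      _ = ‖v‖ * ‖‖p.1 - p.2‖⁻¹ ^ 2‖ := by simp [mul_comm]
  refine ((hval.mul_of_isBigO_one hsing).add
    (isBigO_fderiv_offDiag hF hK v |>.mul_of_isBigO_one (isBigO_inv_norm_sub_offDiag hK))).congr'
    (eventually_principal.2 fun p hp => ?_) EventuallyEq.rfl
  have hFp : DifferentiableAt ℝ (F p.2) p.1 :=
    (hF.comp (contDiff_const.prodMk contDiff_id)).differentiable one_ne_zero p.1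
  dsimp only
  rw [fderiv_div_norm_sub hFp hp.2.2]
  ring

end

theorem EuclideanSpace.abs_apply_le_norm {ι : Type*} [Fintype ι] (z : EuclideanSpace ℝ ι)
    (i : ι) : |z i| ≤ ‖z‖ := by
  simpa using PiLp.norm_apply_le z i

theorem abs_d1_le (z : E3) (j : Fin 3) : |d1 z j| ≤ ‖z‖⁻¹ ^ 2 := by
  rw [d1, abs_div, abs_neg, abs_of_nonneg (by positivity : (0 : ℝ) ≤ ‖z‖ ^ 3), div_eq_mul_inv,
    ← inv_pow, ← mul_inv_pow_add_two ‖z‖ 1]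
  gcongr
  exact EuclideanSpace.abs_apply_le_norm z j

theorem abs_d2_le (z : E3) (k j : Fin 3) : |d2 z k j| ≤ 4 * ‖z‖⁻¹ ^ 3 := by
  have hnum : |3 * z k * z j - (if k = j then (1 : ℝ) else 0) * ‖z‖ ^ 2| ≤ 4 * ‖z‖ ^ 2 := by
    have hkj : |z k * z j| ≤ ‖z‖ ^ 2 := by
      rw [abs_mul, sq]
      exact mul_le_mul (EuclideanSpace.abs_apply_le_norm z k)
        (EuclideanSpace.abs_apply_le_norm z j) (abs_nonneg _) (norm_nonneg _)
    have hδ : |(if k = j then (1 : ℝ) else 0) * ‖z‖ ^ 2| ≤ ‖z‖ ^ 2 := by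
      split_ifs <;> simp
    calc _ ≤ |3 * z k * z j| + |(if k = j then (1 : ℝ) else 0) * ‖z‖ ^ 2| := abs_sub _ _
      _ ≤ 3 * ‖z‖ ^ 2 + ‖z‖ ^ 2 := by
        rw [mul_assoc, abs_mul, abs_of_pos three_pos]
        gcongr
      _ = 4 * ‖z‖ ^ 2 := by ring
  rw [d2, abs_div, abs_of_nonneg (by positivity : (0 : ℝ) ≤ ‖z‖ ^ 5), div_eq_mul_inv, ← inv_pow]
  calc _ ≤ 4 * ‖z‖ ^ 2 * ‖z‖⁻¹ ^ 5 := by gcongr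
    _ = 4 * ‖z‖⁻¹ ^ 3 := by
      rw [sq, mul_assoc, mul_assoc, mul_inv_pow_add_two ‖z‖ 3, mul_inv_pow_add_two ‖z‖ 2]

theorem isBigO_d1 (l : Filter (E3 × E3)) (j : Fin 3) :
    (fun p : E3 × E3 => d1 (p.1 - p.2) j) =O[l] (fun p => ‖p.1 - p.2‖⁻¹ ^ 2) :=
  .of_bound' (.of_forall fun p => by simpa using abs_d1_le (p.1 - p.2) j)

theorem isBigO_d2 (l : Filter (E3 × E3)) (k j : Fin 3) :
    (fun p : E3 × E3 => d2 (p.1 - p.2) k j) =O[l] (fun p => ‖p.1 - p.2‖⁻¹ ^ 3) :=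
  .of_bound 4 (.of_forall fun p => by simpa using abs_d2_le (p.1 - p.2) k j)

section
variable {a : Fin 3 → Fin 3 → E3 → ℝ} {κ : E3 → ℝ} {χ : E3 → ℝ} {K : Set E3}

theorem isBigO_Rker (haC : ∀ k j, ContDiff ℝ 1 (a k j)) (hκ : Continuous κ) (ω : ℝ)
    (hχ : ContDiff ℝ 2 χ) (hχ0 : χ 0 = 1) (hK : IsCompact K) :
    (fun p : E3 × E3 => Rker a κ ω χ p.1 p.2) =O[𝓟 K.offDiag]
      (fun p => ‖p.1 - p.2‖⁻¹ ^ 2) := by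
  have hχ1 : ContDiff ℝ 1 χ := hχ.of_le one_le_two
  have hdχ : ContDiff ℝ 1 (fderiv ℝ χ) := hχ.fderiv_right le_rfl
  have hχsub : (fun p : E3 × E3 => χ (p.1 - p.2) - 1) =O[𝓟 K.offDiag]
      (fun p => ‖p.1 - p.2‖) := by
    simpa [hχ0] using (hχ1.isBigO_comp_sub_sub_apply_zero hK).mono
      (Filter.principal_mono.2 K.offDiag_subset_prod)
  have ha (k j : Fin 3) : (fun p : E3 × E3 => a k j p.1) =O[𝓟 K.offDiag] (fun _ => (1 : ℝ)) :=
    Continuous.isBigO_one_offDiag ((haC k j).continuous.comp continuous_fst) hK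
  have hsummand (k j : Fin 3) : (fun p : E3 × E3 =>
      fderiv ℝ (fun w => fderiv ℝ χ (w - p.2) (EuclideanSpace.single j 1) * a k j w / ‖w - p.2‖)
          p.1 (EuclideanSpace.single k 1)
        + fderiv ℝ (fun w => a k j w * χ (w - p.2)) p.1 (EuclideanSpace.single k 1)
            * d1 (p.1 - p.2) j
        + a k j p.1 * (χ (p.1 - p.2) - 1) * d2 (p.1 - p.2) k j) =O[𝓟 K.offDiag]
      (fun p => ‖p.1 - p.2‖⁻¹ ^ 2) := by
    refine ((isBigO_fderiv_div_norm_sub_offDiag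
      (F := fun y w => fderiv ℝ χ (w - y) (EuclideanSpace.single j 1) * a k j w) ?_ hK _).add
      ((isBigO_fderiv_offDiag (F := fun y w => a k j w * χ (w - y)) ?_ hK _).mul_of_isBigO_one
        (isBigO_d1 _ j))).add (((ha k j).mul_of_isBigO_one hχsub).mul_inv_pow (isBigO_d2 _ k j))
    · exact ((hdχ.comp (contDiff_snd.sub contDiff_fst)).clm_apply contDiff_const).mul
        ((haC k j).comp contDiff_snd)
    · exact ((haC k j).comp contDiff_snd).mul (hχ1.comp (contDiff_snd.sub contDiff_fst))
  have hκχ : (fun p : E3 × E3 => ω ^ 2 * κ p.1 * χ (p.1 - p.2) / (4 * Real.pi))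
      =O[𝓟 K.offDiag] (fun _ => (1 : ℝ)) :=
    Continuous.isBigO_one_offDiag (by fun_prop) hK
  have hzeroth := (hκχ.mul_of_isBigO_one (isBigO_inv_norm_sub_offDiag hK)).congr_left
    fun p => show _ = ω ^ 2 * κ p.1 * χ (p.1 - p.2) / (4 * Real.pi * ‖p.1 - p.2‖) by ring
  exact ((IsBigO.fun_sum fun k _ => IsBigO.fun_sum fun j _ => hsummand k j).const_mul_left _).sub
    hzeroth

theorem isBigO_Rtker (haC : ∀ k j, ContDiff ℝ 1 (a k j)) (hκ : Continuous κ) (ω : ℝ)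
    (hχ : ContDiff ℝ 2 χ) (hχ0 : χ 0 = 1) (hK : IsCompact K) :
    (fun p : E3 × E3 => Rtker a κ ω χ p.1 p.2) =O[𝓟 K.offDiag]
      (fun p => ‖p.1 - p.2‖⁻¹ ^ 2) := by
  have hdiff (k j : Fin 3) : (fun p : E3 × E3 => (a k j p.1 - a k j p.2) * d2 (p.1 - p.2) k j)
      =O[𝓟 K.offDiag] (fun p => ‖p.1 - p.2‖⁻¹ ^ 2) :=
    ((haC k j).isBigO_sub_sub hK |>.mono (Filter.principal_mono.2 K.offDiag_subset_prod))
      |>.mul_inv_pow (isBigO_d2 _ k j)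
  exact (isBigO_Rker haC hκ ω hχ hχ0 hK).sub
    ((IsBigO.fun_sum fun k _ => IsBigO.fun_sum fun j _ => hdiff k j).const_mul_left _)

end

theorem stmt13_general (a : Fin 3 → Fin 3 → E3 → ℝ)
    (haC : ∀ k j, ContDiff ℝ 1 (a k j))
    (κ : E3 → ℝ) (hκ : Continuous κ) (ω : ℝ)
    (χ : E3 → ℝ) (hχ : ContDiff ℝ 2 χ) (hχ0 : χ 0 = 1) :
    ∀ K : Set E3, IsCompact K → ∃ C > (0 : ℝ), ∀ x ∈ K, ∀ y ∈ K, x ≠ y →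
      |Rker a κ ω χ x y| ≤ C * ‖x - y‖⁻¹ ^ 2 ∧
      |Rtker a κ ω χ x y| ≤ C * ‖x - y‖⁻¹ ^ 2 := by
  intro K hK
  obtain ⟨C₁, hC₁, hR⟩ := (isBigO_Rker haC hκ ω hχ hχ0 hK).exists_pos
  obtain ⟨C₂, -, hRt⟩ := (isBigO_Rtker haC hκ ω hχ hχ0 hK).exists_pos
  refine ⟨max C₁ C₂, lt_max_of_lt_left hC₁, fun x hx y hy hxy => ?_⟩
  have hxy' : (x, y) ∈ K.offDiag := ⟨hx, hy, hxy⟩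
  have hR := isBigOWith_principal.1 hR _ hxy'
  have hRt := isBigOWith_principal.1 hRt _ hxy'
  simp only [Real.norm_eq_abs, abs_pow, abs_inv, abs_norm] at hR hRt
  constructor
  · exact hR.trans (by gcongr; exact le_max_left _ _)
  · exact hRt.trans (by gcongr; exact le_max_right _ _)

/-- the kernels `R` and `R̃` have only weak singularities of type
`O(|x−y|⁻²)` on the diagonal: on every compact `K ⊂ ℝ³` there is `C > 0` with
`|R(x,y)| ≤ C|x−y|⁻²` and `|R̃(x,y)| ≤ C|x−y|⁻²` for `x, y ∈ K`, `x ≠ y`. -/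
theorem stmt13 (a : Fin 3 → Fin 3 → E3 → ℝ)
    (haC : ∀ k j, ContDiff ℝ 1 (a k j)) (hsym : ∀ k j, a k j = a j k)
    (κ : E3 → ℝ) (hκ : Continuous κ) (ω : ℝ)
    (χ : E3 → ℝ) (hχ : ContDiff ℝ 2 χ) (hχc : HasCompactSupport χ) (hχ0 : χ 0 = 1) :
    ∀ K : Set E3, IsCompact K → ∃ C > (0 : ℝ), ∀ x ∈ K, ∀ y ∈ K, x ≠ y →
      |Rker a κ ω χ x y| ≤ C * ‖x - y‖⁻¹ ^ 2 ∧
      |Rtker a κ ω χ x y| ≤ C * ‖x - y‖⁻¹ ^ 2 :=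
  stmt13_general a haC κ hκ ω χ hχ hχ0
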